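/- arXiv:1602.07556 — 5 statements merged into one kernel-verified Lean document; each statement's English description precedes it below -/
import Mathlib

section
/- For positive integers d_1,...,d_k with d_1 + ... + d_k = n, and any j with 0 ≤ j ≤ k-1, the sum over all (k-j)-element subsets I of {1,...,k} of the products ∏_{i∈I} d_i is at most binomial(n,j) · ∏_{i=1}^k d_i. -/
open Finset

theorem partial_transversals_le (n k j : ℕ) (d : Fin k → ℕ)
    (hpos : ∀ i, 0 < d i) (hsum : ∑ i, d i = n)
    (hj : j ≤ k - 1) :
    ∑ I ∈ (Finset.univ : Finset (Fin k)).powersetCard (k - j), ∏ i ∈ I, d i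
      ≤ n.choose j * ∏ i, d i := by
  have hk : k ≤ n := by
    calc k = ∑ _i : Fin k, 1 := by simp
    _ ≤ ∑ i, d i := Finset.sum_le_sum fun i _ => hpos i
    _ = n := hsum
  have hjk : j ≤ k := le_trans hj (Nat.sub_le k 1)
  have h1 : ∀ I ∈ (Finset.univ : Finset (Fin k)).powersetCard (k - j),
      ∏ i ∈ I, d i ≤ ∏ i, d i := by
    intro I _
    exact Finset.prod_le_prod_of_subset_of_one_le' (Finset.subset_univ I)
      (fun i _ _ => hpos i)
  calc ∑ I ∈ (Finset.univ : Finset (Fin k)).powersetCard (k - j), ∏ i ∈ I, d i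
      ≤ ∑ _I ∈ (Finset.univ : Finset (Fin k)).powersetCard (k - j), ∏ i, d i :=
        Finset.sum_le_sum h1
    _ = k.choose (k - j) * ∏ i, d i := by
        rw [Finset.sum_const, Finset.card_powersetCard, Finset.card_univ,
          Fintype.card_fin, smul_eq_mul]
    _ = k.choose j * ∏ i, d i := by rw [Nat.choose_symm hjk]
    _ ≤ n.choose j * ∏ i, d i := Nat.mul_le_mul_right _ (Nat.choose_le_choose j hk)
end

section
/- Let W = M_1 M_2 ⋯ M_m be a product of n×n Boolean matrices that is entrywise positive, where each M_i either has at most one 1 per row, or has the form eₖᵀe (k-th row all ones, other rows zero). If at least one of the M_i is of the form eₖᵀe and U is the maximal prefix M_1 ⋯ M_t before the first such matrix, then U has an all-ones column. -/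
/-- Boolean matrix product: `(A * B)[i,j] = 1` iff `∃ k, A[i,k] = B[k,j] = 1`. -/
def bmul {n : ℕ} (A B : Matrix (Fin n) (Fin n) Bool) : Matrix (Fin n) (Fin n) Bool :=
  fun i j => decide (∃ k, A i k = true ∧ B k j = true)

/-- Boolean identity matrix. -/
def bid (n : ℕ) : Matrix (Fin n) (Fin n) Bool := fun i j => decide (i = j)

/-- Product of a list of Boolean matrices. -/
def bprod {n : ℕ} (L : List (Matrix (Fin n) (Fin n) Bool)) : Matrix (Fin n) (Fin n) Bool :=
  L.foldr bmul (bid n)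

/-- A Boolean matrix is (entrywise) positive if all its entries are 1. -/
def bpos {n : ℕ} (A : Matrix (Fin n) (Fin n) Bool) : Prop := ∀ i j, A i j = true

/-- A set of Boolean matrices is primitive if some nonempty product of its elements
is entrywise positive. -/
def Primitive {n : ℕ} (M : Set (Matrix (Fin n) (Fin n) Bool)) : Prop :=
  ∃ L : List (Matrix (Fin n) (Fin n) Bool),
    L ≠ [] ∧ (∀ A ∈ L, A ∈ M) ∧ bpos (bprod L)

/-- The exponent of a primitive set: the length of the shortest positive product. -/
noncomputable def expSet {n : ℕ} (M : Set (Matrix (Fin n) (Fin n) Bool)) : ℕ :=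
  sInf {m | ∃ L : List (Matrix (Fin n) (Fin n) Bool),
    L.length = m ∧ L ≠ [] ∧ (∀ A ∈ L, A ∈ M) ∧ bpos (bprod L)}

/-- A Boolean matrix has at most one 1 per row (adjacency matrix of a partial function). -/
def atMostOnePerRow {n : ℕ} (A : Matrix (Fin n) (Fin n) Bool) : Prop :=
  ∀ i j j', A i j = true → A i j' = true → j = j'

/-- The matrix `eₖᵀe`: its `k`-th row is all ones, all other rows are zero. -/
def rowOnes {n : ℕ} (k : Fin n) : Matrix (Fin n) (Fin n) Bool :=
  fun i _ => decide (i = k)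

section

variable {n : ℕ}

lemma bmul_assoc (A B C : Matrix (Fin n) (Fin n) Bool) :
    bmul (bmul A B) C = bmul A (bmul B C) := by
  funext i j
  refine decide_eq_decide.mpr ⟨fun ⟨x, hAB, hC⟩ => ?_, fun ⟨y, hA, hBC⟩ => ?_⟩
  · obtain ⟨y, hA, hB⟩ := of_decide_eq_true hAB
    exact ⟨y, hA, decide_eq_true ⟨x, hB, hC⟩⟩
  · obtain ⟨x, hB, hC⟩ := of_decide_eq_true hBC
    exact ⟨x, decide_eq_true ⟨y, hA, hB⟩, hC⟩

lemma bid_bmul (A : Matrix (Fin n) (Fin n) Bool) : bmul (bid n) A = A := by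
  funext i j
  simp [bmul, bid]

lemma bprod_cons (A : Matrix (Fin n) (Fin n) Bool) (L : List (Matrix (Fin n) (Fin n) Bool)) :
    bprod (A :: L) = bmul A (bprod L) := rfl

lemma bprod_append (L L' : List (Matrix (Fin n) (Fin n) Bool)) :
    bprod (L ++ L') = bmul (bprod L) (bprod L') := by
  induction L with
  | nil => exact (bid_bmul _).symm
  | cons A L ih => rw [List.cons_append, bprod_cons, bprod_cons, ih, bmul_assoc]

lemma eq_of_rowOnes_bmul_apply {k i j : Fin n} {B : Matrix (Fin n) (Fin n) Bool}
    (h : bmul (rowOnes k) B i j = true) : i = k := by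
  obtain ⟨_, hi, -⟩ := of_decide_eq_true h
  exact of_decide_eq_true hi

lemma apply_of_bmul_rowOnes_bmul {k r j : Fin n} {A B : Matrix (Fin n) (Fin n) Bool}
    (h : bmul A (bmul (rowOnes k) B) r j = true) : A r k = true := by
  obtain ⟨x, hA, hx⟩ := of_decide_eq_true h
  rwa [← eq_of_rowOnes_bmul_apply hx]

end

theorem prefix_before_first_rowOnes_has_ones_column_general {n : ℕ}
    (L₁ L₂ : List (Matrix (Fin n) (Fin n) Bool)) (k : Fin n)
    (hpos : bpos (bprod (L₁ ++ rowOnes k :: L₂))) :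
    ∃ c, ∀ r, bprod L₁ r c = true := by
  refine ⟨k, fun r => apply_of_bmul_rowOnes_bmul (B := bprod L₂) (j := k) ?_⟩
  rw [← bprod_cons, ← bprod_append]
  exact hpos r k

theorem prefix_before_first_rowOnes_has_ones_column {n : ℕ}
    (L₁ L₂ : List (Matrix (Fin n) (Fin n) Bool)) (k : Fin n)
    (hall : ∀ A ∈ L₁ ++ rowOnes k :: L₂, atMostOnePerRow A ∨ ∃ k', A = rowOnes k')
    (hpref : ∀ A ∈ L₁, ¬ ∃ k', A = rowOnes k')
    (hpos : bpos (bprod (L₁ ++ rowOnes k :: L₂))) :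
    ∃ c, ∀ r, bprod L₁ r c = true :=
  prefix_before_first_rowOnes_has_ones_column_general L₁ L₂ k hpos
end

section
/- Let A be a synchronizing n-state automaton (n ≥ 2) with sink state s, let M' be the set of adjacency matrices of its letters, and let M = { M' + e_sᵀe : M' ∈ M' } (each matrix of M' with its s-th row replaced by all ones). Then every matrix in M has no zero rows and no zero columns, the set M is primitive, and exp(M) = rt(A) + 1, where rt(A) is the length of the shortest synchronizing word of A. -/
/-- The action of a word on a state of a DFA. -/
def actWord {Q σ : Type*} (δ : Q → σ → Q) (q : Q) (w : List σ) : Q :=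
  w.foldl δ q

/-- Reset threshold: length of a shortest synchronizing word. -/
noncomputable def rt {Q σ : Type*} (δ : Q → σ → Q) : ℕ :=
  sInf {m | ∃ (w : List σ) (f : Q), w.length = m ∧ ∀ q, actWord δ q w = f}

/-- Adjacency matrix of a letter, with the `s`-th row made all ones. -/
def augAdj {n : ℕ} {σ : Type*} (δ : Fin n → σ → Fin n) (s : Fin n) (a : σ) :
    Matrix (Fin n) (Fin n) Bool :=
  fun i j => decide (δ i a = j ∨ i = s)

/-!
A product of augmented letter matrices along a word `v ++ [a]` has a one at `(i, j)` exactly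
when the run from `i` reads `v ++ [a]` into `j`, or when it meets the all-ones row `s` before the
last letter. Since `s` is a sink, the second alternative just says that `v` sends `i` to `s`.
With two or more states the first alternative cannot cover a whole row, so the product is
positive iff `v` is a reset word; and every reset word of a sink automaton resets to the sink.
Hence the positive products have exactly the lengths `|v| + 1` with `v` synchronizing.
-/

namespace SinkAutomaton

variable {n : ℕ} {σ : Type*} {δ : Fin n → σ → Fin n} {s : Fin n}

theorem actWord_cons {Q : Type*} (δ : Q → σ → Q) (q : Q) (a : σ) (w : List σ) :
    actWord δ q (a :: w) = actWord δ (δ q a) w := rfl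

theorem actWord_eq_self_of_sink (hsink : ∀ a, δ s a = s) (w : List σ) : actWord δ s w = s := by
  induction w with
  | nil => rfl
  | cons a w ih => rwa [actWord_cons, hsink]

theorem eq_sink_of_synchronizing (hsink : ∀ a, δ s a = s) {w : List σ} {f : Fin n}
    (hw : ∀ q, actWord δ q w = f) : f = s :=
  (hw s).symm.trans (actWord_eq_self_of_sink hsink w)

theorem ne_nil_of_synchronizing {Q : Type*} [Nontrivial Q] {δ : Q → σ → Q} {w : List σ} {f : Q}
    (hw : ∀ q, actWord δ q w = f) : w ≠ [] := by
  rintro rfl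
  obtain ⟨p, q, hpq⟩ := exists_pair_ne Q
  exact hpq ((hw p).trans (hw q).symm)

theorem rt_eq_sInf_resetting_to_sink (hsink : ∀ a, δ s a = s) :
    rt δ = sInf {m | ∃ w : List σ, w.length = m ∧ ∀ q, actWord δ q w = s} := by
  unfold rt
  congr 1
  ext m
  constructor
  · rintro ⟨w, f, rfl, hw⟩
    exact ⟨w, rfl, eq_sink_of_synchronizing hsink hw ▸ hw⟩
  · rintro ⟨w, rfl, hw⟩
    exact ⟨w, s, rfl, hw⟩

theorem bprod_cons (A : Matrix (Fin n) (Fin n) Bool) (L : List (Matrix (Fin n) (Fin n) Bool)) :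
    bprod (A :: L) = bmul A (bprod L) := rfl

theorem bmul_apply_eq_true (A B : Matrix (Fin n) (Fin n) Bool) (i j : Fin n) :
    bmul A B i j = true ↔ ∃ k, A i k = true ∧ B k j = true :=
  decide_eq_true_iff

theorem augAdj_apply_eq_true (a : σ) (i j : Fin n) :
    augAdj δ s a i j = true ↔ δ i a = j ∨ i = s := by
  simp [augAdj]

theorem bprod_map_augAdj_concat_apply (hsink : ∀ a, δ s a = s) (v : List σ) (a : σ)
    (i j : Fin n) :
    bprod ((v ++ [a]).map (augAdj δ s)) i j = true ↔
      actWord δ i (v ++ [a]) = j ∨ actWord δ i v = s := by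
  induction v generalizing i with
  | nil => simp [bprod, bmul, bid, augAdj, actWord]
  | cons b v ih =>
    rw [List.cons_append, List.map_cons, bprod_cons, bmul_apply_eq_true, actWord_cons,
      actWord_cons]
    by_cases hi : i = s
    · have hrun : actWord δ s v = s := actWord_eq_self_of_sink hsink v
      rw [hi, hsink]
      exact iff_of_true ⟨s, by simp [augAdj], (ih s).2 (Or.inr hrun)⟩ (Or.inr hrun)
    · simp only [augAdj_apply_eq_true, hi, or_false, exists_eq_left', ih]

theorem bpos_bprod_map_augAdj_concat_iff (hsink : ∀ a, δ s a = s) (hn : 2 ≤ n) (v : List σ)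
    (a : σ) : bpos (bprod ((v ++ [a]).map (augAdj δ s))) ↔ ∀ i, actWord δ i v = s := by
  have : Nontrivial (Fin n) := Fin.nontrivial_iff_two_le.2 hn
  simp only [bpos, bprod_map_augAdj_concat_apply hsink]
  refine ⟨fun h i => ?_, fun h i _ => Or.inr (h i)⟩
  obtain ⟨j, hj⟩ := exists_ne (actWord δ i (v ++ [a]))
  exact (h i j).resolve_left hj.symm

theorem setOf_positive_product_length_eq_image_add_one [Nonempty σ] (hsink : ∀ a, δ s a = s)
    (hn : 2 ≤ n) :
    {m | ∃ L : List (Matrix (Fin n) (Fin n) Bool), L.length = m ∧ L ≠ [] ∧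
        (∀ A ∈ L, A ∈ {A | ∃ a : σ, A = augAdj δ s a}) ∧ bpos (bprod L)} =
      (· + 1) '' {m | ∃ w : List σ, w.length = m ∧ ∀ q, actWord δ q w = s} := by
  ext m
  constructor
  · rintro ⟨L, rfl, hL, hmem, hpos⟩
    obtain ⟨w, rfl⟩ : L ∈ Set.range (List.map (augAdj δ s)) := by
      rw [Set.range_list_map]
      exact fun A hA => (hmem A hA).imp fun _ h => h.symm
    obtain ⟨v, a, rfl⟩ := (List.eq_nil_or_concat' w).resolve_left (by simpa using hL)
    exact ⟨v.length, ⟨v, rfl, (bpos_bprod_map_augAdj_concat_iff hsink hn v a).1 hpos⟩, by simp⟩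
  · rintro ⟨_, ⟨v, rfl, hv⟩, rfl⟩
    let a : σ := Classical.arbitrary σ
    refine ⟨(v ++ [a]).map (augAdj δ s), by simp, by simp, ?_,
      (bpos_bprod_map_augAdj_concat_iff hsink hn v a).2 hv⟩
    simp only [List.mem_map]
    rintro _ ⟨b, -, rfl⟩
    exact ⟨b, rfl⟩

end SinkAutomaton

open SinkAutomaton in
theorem sink_automaton_exponent {n : ℕ} {σ : Type*}
    (hn : 2 ≤ n) (δ : Fin n → σ → Fin n) (s : Fin n)
    (hsink : ∀ a, δ s a = s)
    (hsync : ∃ (w : List σ) (f : Fin n), ∀ q, actWord δ q w = f) :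
    (∀ a : σ, (∀ i, ∃ j, augAdj δ s a i j = true) ∧ (∀ j, ∃ i, augAdj δ s a i j = true)) ∧
      Primitive {A | ∃ a : σ, A = augAdj δ s a} ∧
      expSet {A | ∃ a : σ, A = augAdj δ s a} = rt δ + 1 := by
  obtain ⟨w, f, hw⟩ := hsync
  have hreset : {m | ∃ w : List σ, w.length = m ∧ ∀ q, actWord δ q w = s}.Nonempty :=
    ⟨w.length, w, rfl, eq_sink_of_synchronizing hsink hw ▸ hw⟩
  have : Nontrivial (Fin n) := Fin.nontrivial_iff_two_le.2 hn
  have : Nonempty σ := ⟨w.head (ne_nil_of_synchronizing hw)⟩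
  have hlengths := setOf_positive_product_length_eq_image_add_one (δ := δ) hsink hn
  refine ⟨fun a => ⟨fun i => ⟨δ i a, by simp [augAdj]⟩, fun _ => ⟨s, by simp [augAdj]⟩⟩, ?_, ?_⟩
  · have hpositive := hreset.image (· + 1)
    rw [← hlengths] at hpositive
    obtain ⟨_, L, -, hL⟩ := hpositive
    exact ⟨L, hL⟩
  · rw [expSet, hlengths, rt_eq_sInf_resetting_to_sink hsink,
      ← (add_left_mono : Monotone (· + 1 : ℕ → ℕ)).map_csInf hreset]
end

section
/- In the iterative construction of a carefully synchronizing word for an n-state partial automaton, if u_k is a word defined on all states with |Q·u_k| ≤ k, and t is a shortest word such that u_k t u_k is defined on all states and |Q·u_k t u_k| ≤ k−1, then the length of t is at most the number of transversals of the partition of Q induced by u_k (states p, q in the same part iff p·u_k = q·u_k), and hence |t| ≤ 2^{n−k} for k ≥ n/2. -/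
open Finset

/-- Action of a word on a state of a partial automaton
(undefined transitions propagate). -/
def pAct {n : ℕ} {σ : Type*} (δ : Fin n → σ → Option (Fin n))
    (q : Fin n) (w : List σ) : Option (Fin n) :=
  w.foldl (fun o a => o.bind (fun p => δ p a)) (some q)

/-- The image of the full state set under a word. -/
def img {n : ℕ} {σ : Type*} [DecidableEq σ] (δ : Fin n → σ → Option (Fin n))
    (w : List σ) : Finset (Option (Fin n)) :=
  Finset.univ.image (fun q => pAct δ q w)

lemma foldl_bind {n : ℕ} {σ : Type*} (δ : Fin n → σ → Option (Fin n))
    (o : Option (Fin n)) (w : List σ) :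
    w.foldl (fun o a => o.bind (fun p => δ p a)) o = o.bind (fun p => pAct δ p w) := by
  induction w generalizing o with
  | nil => cases o <;> simp [pAct]
  | cons a w ih =>
    simp only [List.foldl_cons]
    rw [ih]
    cases o with
    | none => simp
    | some p =>
      simp only [Option.bind_some]
      show (δ p a).bind _ = pAct δ p (a :: w)
      rw [pAct, List.foldl_cons, Option.bind_some, ih]

lemma pAct_append {n : ℕ} {σ : Type*} (δ : Fin n → σ → Option (Fin n))
    (q : Fin n) (w1 w2 : List σ) :
    pAct δ q (w1 ++ w2) = (pAct δ q w1).bind (fun p => pAct δ p w2) := by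
  rw [pAct, List.foldl_append]
  exact foldl_bind δ _ w2

lemma img_append {n : ℕ} {σ : Type*} [DecidableEq σ] (δ : Fin n → σ → Option (Fin n))
    (w1 w2 : List σ) :
    img δ (w1 ++ w2) = (img δ w1).image (fun o => o.bind (fun p => pAct δ p w2)) := by
  rw [img, img, Finset.image_image]
  apply Finset.image_congr
  intro q _
  exact pAct_append δ q w1 w2

lemma isSome_prefix {n : ℕ} {σ : Type*} (δ : Fin n → σ → Option (Fin n))
    {q : Fin n} {w1 w2 : List σ} (h : (pAct δ q (w1 ++ w2)).isSome) :
    (pAct δ q w1).isSome := by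
  rw [pAct_append] at h
  cases hh : pAct δ q w1 with
  | none => rw [hh] at h; simp at h
  | some p => simp

theorem step_length_le_transversals {n k : ℕ} {σ : Type*} [DecidableEq σ]
    (δ : Fin n → σ → Option (Fin n)) (u t : List σ)
    (hu_def : ∀ q, (pAct δ q u).isSome)
    (hu_card : (img δ u).card ≤ k)
    (ht_def : ∀ q, (pAct δ q (u ++ t ++ u)).isSome)
    (ht_card : (img δ (u ++ t ++ u)).card ≤ k - 1)
    (ht_min : ∀ t' : List σ,
      (∀ q, (pAct δ q (u ++ t' ++ u)).isSome) →
      (img δ (u ++ t' ++ u)).card ≤ k - 1 →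
      t.length ≤ t'.length) :
    t.length ≤
      ((Finset.univ : Finset (Finset (Fin n))).filter
        (fun S => ∀ v ∈ img δ u, (S.filter (fun q => pAct δ q u = v)).card = 1)).card ∧
    (n ≤ 2 * k → t.length ≤ 2 ^ (n - k)) := by
  by_cases hA : (img δ u).card ≤ k - 1
  · -- degenerate case : the empty word already works, so t is empty
    have h0 : t.length ≤ 0 := by
      have hd : ∀ q, (pAct δ q (u ++ ([] : List σ) ++ u)).isSome := by
        intro q
        simp only [List.append_nil]
        rw [pAct_append]
        obtain ⟨p, hp⟩ := Option.isSome_iff_exists.mp (hu_def q)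
        rw [hp, Option.bind_some]
        exact hu_def p
      have hc : (img δ (u ++ ([] : List σ) ++ u)).card ≤ k - 1 := by
        simp only [List.append_nil]
        calc (img δ (u ++ u)).card ≤ (img δ u).card := by
              rw [img_append]; exact Finset.card_image_le
          _ ≤ k - 1 := hA
      simpa using ht_min [] hd hc
    have hz : t.length = 0 := Nat.le_zero.mp h0
    rw [hz]
    exact ⟨Nat.zero_le _, fun _ => Nat.zero_le _⟩
  · have hk : (img δ u).card = k := by omega
    have hk1 : 1 ≤ k := by omega
    -- the extracted state set after u ++ w
    set f : List σ → Finset (Fin n) :=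
      fun w => univ.filter (fun q => some q ∈ img δ (u ++ w)) with hf
    have himg : ∀ w : List σ, (∀ q, (pAct δ q (u ++ w)).isSome) →
        (f w).image some = img δ (u ++ w) := by
      intro w hw
      ext x
      simp only [hf, Finset.mem_image, Finset.mem_filter, Finset.mem_univ, true_and]
      constructor
      · rintro ⟨p, hp, rfl⟩; exact hp
      · intro hx
        rw [img, Finset.mem_image] at hx
        obtain ⟨q, -, hq⟩ := hx
        obtain ⟨p, hp⟩ := Option.isSome_iff_exists.mp (hw q)
        refine ⟨p, ?_, by rw [← hq, hp]⟩
        rw [img, Finset.mem_image]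
        exact ⟨q, Finset.mem_univ q, by rw [hq, ← hq, hp]⟩
    have hcardf : ∀ w : List σ, (∀ q, (pAct δ q (u ++ w)).isSome) → (f w).card ≤ k := by
      intro w hw
      have h1 : (f w).card = (img δ (u ++ w)).card := by
        rw [← himg w hw]
        exact (Finset.card_image_of_injective _ (Option.some_injective _)).symm
      rw [h1, img_append]
      exact le_trans Finset.card_image_le (le_of_eq hk)
    -- L1 : image after u++w++u
    have hL1 : ∀ w : List σ, (∀ q, (pAct δ q (u ++ w)).isSome) →
        img δ ((u ++ w) ++ u) = (f w).image (fun p => pAct δ p u) := by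
      intro w hw
      rw [img_append, ← himg w hw, Finset.image_image]
      rfl
    -- definedness of all prefixes
    have hpref : ∀ i, ∀ q, (pAct δ q (u ++ t.take i)).isSome := by
      intro i q
      have : u ++ t ++ u = (u ++ t.take i) ++ (t.drop i ++ u) := by
        conv_lhs => rw [← List.take_append_drop i t]
        simp only [List.append_assoc]
      exact isSome_prefix δ (by rw [← this]; exact ht_def q)
    -- any defined strict prefix keeps a full-size image (by minimality)
    have hbig : ∀ i, i < t.length → (img δ (u ++ t.take i ++ u)).card = k := by
      intro i hi
      have hw := hpref i
      have hd : ∀ q, (pAct δ q (u ++ t.take i ++ u)).isSome := by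
        intro q
        rw [List.append_assoc] at *
        rw [← List.append_assoc, pAct_append]
        obtain ⟨p, hp⟩ := Option.isSome_iff_exists.mp (hw q)
        rw [hp, Option.bind_some]
        exact hu_def p
      have hle : (img δ (u ++ t.take i ++ u)).card ≤ k := by
        rw [img_append]
        calc _ ≤ (img δ (u ++ t.take i)).card := Finset.card_image_le
          _ ≤ k := by
              rw [img_append]
              exact le_trans Finset.card_image_le (le_of_eq hk)
      by_contra hne
      have hlt : (img δ (u ++ t.take i ++ u)).card ≤ k - 1 := by omega
      have hmin := ht_min (t.take i) hd hlt
      rw [List.length_take] at hmin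
      omega
    -- each intermediate state set is a transversal
    have htrans : ∀ i, i < t.length → ∀ v ∈ img δ u,
        ((f (t.take i)).filter (fun q => pAct δ q u = v)).card = 1 := by
      intro i hi
      have hw := hpref i
      have himgeq : (f (t.take i)).image (fun p => pAct δ p u) = img δ u := by
        apply Finset.eq_of_subset_of_card_le
        · intro x hx
          rw [Finset.mem_image] at hx
          obtain ⟨p, -, rfl⟩ := hx
          rw [img]
          exact Finset.mem_image_of_mem _ (Finset.mem_univ p)
        · rw [hk, ← hL1 _ hw]
          exact le_of_eq (hbig i hi).symm
      have hcf : (f (t.take i)).card = k := le_antisymm (hcardf _ hw)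
        (by rw [← hk, ← himgeq]; exact Finset.card_image_le)
      have hinj2 : Set.InjOn (fun p => pAct δ p u) ↑(f (t.take i)) :=
        Finset.card_image_iff.mp (by rw [himgeq, hk, hcf])
      intro v hv
      have hv' : v ∈ (f (t.take i)).image (fun p => pAct δ p u) := himgeq ▸ hv
      rw [Finset.mem_image] at hv'
      obtain ⟨p, hp, hpv⟩ := hv'
      rw [Finset.card_eq_one]
      refine ⟨p, ?_⟩
      ext x
      simp only [Finset.mem_filter, Finset.mem_singleton]
      constructor
      · rintro ⟨hx, hxv⟩
        exact hinj2 hx hp (by simp only []; rw [hxv, hpv])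
      · rintro rfl
        exact ⟨hp, hpv⟩
    -- intermediate state sets are pairwise distinct
    have hdist : ∀ i j, i < j → j < t.length → f (t.take i) ≠ f (t.take j) := by
      intro i j hij hj heq
      have hIeq : img δ (u ++ t.take i) = img δ (u ++ t.take j) := by
        rw [← himg _ (hpref i), ← himg _ (hpref j), heq]
      have hsplit : u ++ (t.take i ++ t.drop j) ++ u
          = (u ++ t.take i) ++ (t.drop j ++ u) := by
        simp only [List.append_assoc]
      have hsplit2 : u ++ t ++ u = (u ++ t.take j) ++ (t.drop j ++ u) := by
        conv_lhs => rw [← List.take_append_drop j t]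
        simp only [List.append_assoc]
      have himg' : img δ (u ++ (t.take i ++ t.drop j) ++ u) = img δ (u ++ t ++ u) := by
        rw [hsplit, hsplit2, img_append δ (u ++ t.take i) (t.drop j ++ u),
          img_append δ (u ++ t.take j) (t.drop j ++ u), hIeq]
      have hd : ∀ q, (pAct δ q (u ++ (t.take i ++ t.drop j) ++ u)).isSome := by
        intro q
        rw [hsplit, pAct_append]
        obtain ⟨p, hp⟩ := Option.isSome_iff_exists.mp (hpref i q)
        have hpm : some p ∈ img δ (u ++ t.take j) := by
          rw [← hIeq, img, Finset.mem_image]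
          exact ⟨q, Finset.mem_univ q, hp⟩
        rw [img, Finset.mem_image] at hpm
        obtain ⟨q', -, hq'⟩ := hpm
        rw [hp, Option.bind_some]
        have hds := ht_def q'
        rw [hsplit2, pAct_append, hq', Option.bind_some] at hds
        exact hds
      have hmin := ht_min (t.take i ++ t.drop j) hd (by rw [himg']; exact ht_card)
      rw [List.length_append, List.length_take, List.length_drop] at hmin
      omega
    -- first bound
    have goal1 : t.length ≤ ((Finset.univ : Finset (Finset (Fin n))).filter
        (fun S => ∀ v ∈ img δ u, (S.filter (fun q => pAct δ q u = v)).card = 1)).card := by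
      have hmaps : ∀ i ∈ Finset.range t.length,
          f (t.take i) ∈ (Finset.univ : Finset (Finset (Fin n))).filter
            (fun S => ∀ v ∈ img δ u, (S.filter (fun q => pAct δ q u = v)).card = 1) := by
        intro i hi
        rw [Finset.mem_filter]
        exact ⟨Finset.mem_univ _, htrans i (Finset.mem_range.mp hi)⟩
      have hinj : Set.InjOn (fun i => f (t.take i)) ↑(Finset.range t.length) := by
        intro i hi j hj hij
        simp only [Finset.coe_range, Set.mem_Iio] at hi hj
        by_contra hne
        rcases Nat.lt_trichotomy i j with h | h | h
        · exact hdist i j h hj hij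
        · exact hne h
        · exact hdist j i h hi hij.symm
      have hle := Finset.card_le_card_of_injOn _ hmaps hinj
      simpa using hle
    -- counting transversals
    have hcount : ((Finset.univ : Finset (Finset (Fin n))).filter
        (fun S => ∀ v ∈ img δ u, (S.filter (fun q => pAct δ q u = v)).card = 1)).card
        ≤ 2 ^ (n - k) := by
      set cls : Fin n → Finset (Fin n) :=
        fun q => univ.filter (fun p => pAct δ p u = pAct δ q u) with hcls
      have hmemcls : ∀ q, q ∈ cls q := fun q => Finset.mem_filter.mpr ⟨Finset.mem_univ q, rfl⟩
      set g : Fin n → Fin n := fun q => (cls q).min' ⟨q, hmemcls q⟩ with hg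
      have hgspec : ∀ q, pAct δ (g q) u = pAct δ q u := by
        intro q
        have h := Finset.min'_mem (cls q) ⟨q, hmemcls q⟩
        exact (Finset.mem_filter.mp h).2
      have hgeq : ∀ p q, pAct δ p u = pAct δ q u → g p = g q := by
        intro p q h
        have hc : cls p = cls q := by
          ext r
          simp only [hcls, Finset.mem_filter, h]
        apply le_antisymm
        · have hm : g q ∈ cls p := by rw [hc]; exact Finset.min'_mem _ ⟨q, hmemcls q⟩
          exact Finset.min'_le _ _ hm
        · have hm : g p ∈ cls q := by rw [← hc]; exact Finset.min'_mem _ ⟨p, hmemcls p⟩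
          exact Finset.min'_le _ _ hm
      have hfixcard : (univ.filter (fun q => g q = q)).card = k := by
        rw [← hk, img]
        apply Finset.card_bij (fun q _ => pAct δ q u)
        · intro a ha
          exact Finset.mem_image_of_mem _ (Finset.mem_univ a)
        · intro a ha b hb hab
          have ha' := (Finset.mem_filter.mp ha).2
          have hb' := (Finset.mem_filter.mp hb).2
          rw [← ha', ← hb']
          exact hgeq a b hab
        · intro v hv
          rw [Finset.mem_image] at hv
          obtain ⟨q, -, rfl⟩ := hv
          exact ⟨g q, Finset.mem_filter.mpr ⟨Finset.mem_univ _, hgeq _ _ (hgspec q)⟩, hgspec q⟩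
      have hnfixcard : (univ.filter (fun q => ¬ g q = q)).card = n - k := by
        have htot := Finset.card_filter_add_card_filter_not
          (s := (univ : Finset (Fin n))) (p := fun q => g q = q)
        rw [Finset.card_univ, Fintype.card_fin] at htot
        omega
      have hdir : ∀ S : Finset (Fin n), (∀ v ∈ img δ u, (S.filter (fun q => pAct δ q u = v)).card = 1) →
          ∀ S' : Finset (Fin n), (∀ v ∈ img δ u, (S'.filter (fun q => pAct δ q u = v)).card = 1) →
          S.filter (fun q => ¬ g q = q) = S'.filter (fun q => ¬ g q = q) →
          ∀ q ∈ S, q ∈ S' := by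
        intro S hS S' hS' hphi q hq
        by_cases hgq : g q = q
        · have hv : pAct δ q u ∈ img δ u := by
            rw [img]; exact Finset.mem_image_of_mem _ (Finset.mem_univ q)
          obtain ⟨x, hx⟩ := Finset.card_eq_one.mp (hS' _ hv)
          have hxm : x ∈ S' ∧ pAct δ x u = pAct δ q u := by
            have hxx : x ∈ S'.filter (fun r => pAct δ r u = pAct δ q u) := by
              rw [hx]; exact Finset.mem_singleton_self x
            exact Finset.mem_filter.mp hxx
          by_cases hxq : x = q
          · rw [← hxq]; exact hxm.1
          · exfalso
            have hgx : ¬ g x = x := by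
              rw [hgeq x q hxm.2, hgq]
              exact fun h => hxq h.symm
            have hxphi : x ∈ S'.filter (fun r => ¬ g r = r) :=
              Finset.mem_filter.mpr ⟨hxm.1, hgx⟩
            rw [← hphi] at hxphi
            have hxS : x ∈ S := (Finset.mem_filter.mp hxphi).1
            obtain ⟨y, hy⟩ := Finset.card_eq_one.mp (hS _ hv)
            have e1 : x = y := by
              have hxy : x ∈ S.filter (fun r => pAct δ r u = pAct δ q u) :=
                Finset.mem_filter.mpr ⟨hxS, hxm.2⟩
              rw [hy] at hxy; exact Finset.mem_singleton.mp hxy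
            have e2 : q = y := by
              have hqy : q ∈ S.filter (fun r => pAct δ r u = pAct δ q u) :=
                Finset.mem_filter.mpr ⟨hq, rfl⟩
              rw [hy] at hqy; exact Finset.mem_singleton.mp hqy
            exact hxq (e1.trans e2.symm)
        · have hqphi : q ∈ S.filter (fun r => ¬ g r = r) := Finset.mem_filter.mpr ⟨hq, hgq⟩
          rw [hphi] at hqphi
          exact (Finset.mem_filter.mp hqphi).1
      have hmaps2 : ∀ S ∈ (Finset.univ : Finset (Finset (Fin n))).filter
            (fun S => ∀ v ∈ img δ u, (S.filter (fun q => pAct δ q u = v)).card = 1),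
          S.filter (fun q => ¬ g q = q) ∈ (univ.filter (fun q => ¬ g q = q)).powerset := by
        intro S _
        rw [Finset.mem_powerset]
        intro x hx
        have hxx := Finset.mem_filter.mp hx
        exact Finset.mem_filter.mpr ⟨Finset.mem_univ x, hxx.2⟩
      have hinj3 : Set.InjOn (fun S : Finset (Fin n) => S.filter (fun q => ¬ g q = q))
          ↑((Finset.univ : Finset (Finset (Fin n))).filter
            (fun S => ∀ v ∈ img δ u, (S.filter (fun q => pAct δ q u = v)).card = 1)) := by
        intro S hS S' hS' hphi
        have hS1 := (Finset.mem_filter.mp (Finset.mem_coe.mp hS)).2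
        have hS2 := (Finset.mem_filter.mp (Finset.mem_coe.mp hS')).2
        ext q
        exact ⟨fun h => hdir S hS1 S' hS2 hphi q h, fun h => hdir S' hS2 S hS1 hphi.symm q h⟩
      have hle2 := Finset.card_le_card_of_injOn _ hmaps2 hinj3
      calc _ ≤ ((univ.filter (fun q => ¬ g q = q)).powerset).card := hle2
        _ = 2 ^ (n - k) := by rw [Finset.card_powerset, hnfixcard]
    exact ⟨goal1, fun _ => le_trans goal1 hcount⟩
end

section
/- The Černý automaton C_n augmented with an identity letter c belongs to the class 𝒞 with partition Σ_1 = {a, c}, Σ_2 = {b}: for each i ∈ {1,2}, every state is the image of some state under some letter of Σ_i, and for every choice of transitions of each state by letters in Σ_i there is a single letter in Σ_i realizing all of them; moreover adding c does not change the reset threshold. -/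
/-- The Černý automaton `C_n`: letter `0` is `a` (maps state `0` to `1`, fixes the rest),
letter `1` is `b` (the cyclic shift). -/
def cerny (n : ℕ) [NeZero n] : Fin n → Fin 2 → Fin n :=
  fun q l => if l = 0 then (if q = 0 then 1 else q) else q + 1

/-- The Černý automaton augmented with an identity letter `c` (letter `2`). -/
def cernyC (n : ℕ) [NeZero n] : Fin n → Fin 3 → Fin n :=
  fun q l => if l = 0 then (if q = 0 then 1 else q) else if l = 1 then q + 1 else q

/-- The two conditions that a part `Σᵢ` of the alphabet partition must satisfy for
membership in the class `𝒞`. -/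
def goodPart {n : ℕ} {σ : Type*} (δ : Fin n → σ → Fin n) (P : Set σ) : Prop :=
  (∀ q, ∃ p, ∃ ℓ ∈ P, δ p ℓ = q) ∧
  (∀ f : Fin n → Fin n, (∀ j, ∃ ℓ ∈ P, δ j ℓ = f j) → ∃ ℓ ∈ P, ∀ j, δ j ℓ = f j)

/-- Embedding of the 2-letter alphabet into the 3-letter one. -/
def emb23 : Fin 2 → Fin 3 := fun l => if l = 0 then 0 else 1

/-- Removing the identity letter from a word over the 3-letter alphabet. -/
def strip3 : List (Fin 3) → List (Fin 2)
  | [] => []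
  | l :: ls => if l = 2 then strip3 ls else (if l = 0 then 0 else 1) :: strip3 ls

lemma strip3_length (w : List (Fin 3)) : (strip3 w).length ≤ w.length := by
  induction w with
  | nil => simp [strip3]
  | cons l ls ih =>
    simp only [strip3]
    split
    · exact ih.trans (Nat.le_succ _)
    · simpa using ih

lemma act_emb (n : ℕ) [NeZero n] (w : List (Fin 2)) (q : Fin n) :
    actWord (cernyC n) q (w.map emb23) = actWord (cerny n) q w := by
  induction w generalizing q with
  | nil => rfl
  | cons l ls ih =>
    simp only [List.map_cons, actWord, List.foldl_cons] at *
    rw [show cernyC n q (emb23 l) = cerny n q l by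
      fin_cases l <;> simp [cerny, cernyC, emb23]]
    exact ih _

lemma act_strip (n : ℕ) [NeZero n] (w : List (Fin 3)) (q : Fin n) :
    actWord (cerny n) q (strip3 w) = actWord (cernyC n) q w := by
  induction w generalizing q with
  | nil => rfl
  | cons l ls ih =>
    fin_cases l <;>
      simp only [strip3, actWord, List.foldl_cons, reduceIte,
        show ((⟨0, by norm_num⟩ : Fin 3) = 2) = False by simp,
        show ((⟨1, by norm_num⟩ : Fin 3) = 2) = False by simp] <;>
      exact ih _

theorem cerny_with_identity_in_classC (n : ℕ) [NeZero n] (hn : 2 ≤ n) :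
    goodPart (cernyC n) {0, 2} ∧ goodPart (cernyC n) {1} ∧
      rt (cernyC n) = rt (cerny n) := by
  refine ⟨⟨?_, ?_⟩, ⟨?_, ?_⟩, ?_⟩
  · -- condition 1 for {a, c}: use the identity letter c
    intro q
    exact ⟨q, 2, by simp, by simp [cernyC]⟩
  · -- condition 2 for {a, c}
    intro f hf
    have hfix : ∀ j : Fin n, j ≠ 0 → f j = j := by
      intro j hj
      obtain ⟨ℓ, hℓ, he⟩ := hf j
      rcases hℓ with h | h <;> subst h <;> simpa [cernyC, hj] using he.symm
    by_cases h0 : f 0 = 0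
    · refine ⟨2, by simp, fun j => ?_⟩
      by_cases hj : j = 0
      · subst hj; simpa [cernyC] using h0.symm
      · simp [cernyC, hfix j hj]
    · -- then the letter a was used at state 0, so f 0 = 1
      have h1 : f 0 = 1 := by
        obtain ⟨ℓ, hℓ, he⟩ := hf 0
        rcases hℓ with h | h <;> subst h
        · simpa [cernyC] using he.symm
        · exact absurd (by simpa [cernyC] using he.symm) h0
      refine ⟨0, by simp, fun j => ?_⟩
      by_cases hj : j = 0
      · subst hj; simpa [cernyC] using h1.symm
      · simp [cernyC, hj, hfix j hj]
  · -- condition 1 for {b}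
    intro q
    exact ⟨q - 1, 1, by simp, by simp [cernyC]⟩
  · -- condition 2 for {b}
    intro f hf
    refine ⟨1, by simp, fun j => ?_⟩
    obtain ⟨ℓ, hℓ, he⟩ := hf j
    rcases hℓ with rfl
    exact he
  · -- reset thresholds coincide
    set S2 := {m | ∃ (w : List (Fin 2)) (f : Fin n), w.length = m ∧ ∀ q, actWord (cerny n) q w = f}
    set S3 := {m | ∃ (w : List (Fin 3)) (f : Fin n), w.length = m ∧ ∀ q, actWord (cernyC n) q w = f}
    have hsub : S2 ⊆ S3 := by
      rintro m ⟨w, f, hlen, hsync⟩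
      exact ⟨w.map emb23, f, by simpa using hlen, fun q => by rw [act_emb]; exact hsync q⟩
    have hstrip : ∀ m ∈ S3, ∃ m' ∈ S2, m' ≤ m := by
      rintro m ⟨w, f, hlen, hsync⟩
      exact ⟨(strip3 w).length, ⟨strip3 w, f, rfl, fun q => by rw [act_strip]; exact hsync q⟩,
        hlen ▸ strip3_length w⟩
    rcases Set.eq_empty_or_nonempty S3 with h3 | h3
    · have h2 : S2 = ∅ := Set.eq_empty_of_subset_empty (h3 ▸ hsub)
      show sInf S3 = sInf S2
      rw [h2, h3]
    · apply le_antisymm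
      · show sInf S3 ≤ sInf S2
        have h2 : S2.Nonempty := by
          obtain ⟨m, hm⟩ := h3
          obtain ⟨m', hm', _⟩ := hstrip m hm
          exact ⟨m', hm'⟩
        exact Nat.sInf_le (hsub (Nat.sInf_mem h2))
      · show sInf S2 ≤ sInf S3
        obtain ⟨m', hm', hle⟩ := hstrip _ (Nat.sInf_mem h3)
        exact le_trans (Nat.sInf_le hm') hle
end
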